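/- arXiv:2010.06305 — 3 statements merged into one kernel-verified Lean document; each statement's English description precedes it below -/
import Mathlib

section
/- If a tuple (X_1,…,X_K) of n×n complex matrices is simultaneously diagonalizable, then rank(Ξ(X_1,…,X_K)) ≤ n² − n. -/
open Matrix Kronecker

/-- Column-stacking vectorization: `vecM X (j, i) = X i j`
(the pair `(j, i)` encodes position `(j-1)*n + i`). -/
def vecM {n : ℕ} (X : Matrix (Fin n) (Fin n) ℂ) : Fin n × Fin n → ℂ :=
  fun p => X p.2 p.1

/-- The Kronecker sum `I_n ⊗ X - Xᵀ ⊗ I_n`. -/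
def kronSum {n : ℕ} (X : Matrix (Fin n) (Fin n) ℂ) :
    Matrix (Fin n × Fin n) (Fin n × Fin n) ℂ :=
  (1 : Matrix (Fin n) (Fin n) ℂ) ⊗ₖ X - Xᵀ ⊗ₖ (1 : Matrix (Fin n) (Fin n) ℂ)

/-- `Ξ(X_1, …, X_K)`: the vertical stack of the `I_n ⊗ X_k - X_kᵀ ⊗ I_n`. -/
def XiM {n K : ℕ} (X : Fin K → Matrix (Fin n) (Fin n) ℂ) :
    Matrix (Fin K × (Fin n × Fin n)) (Fin n × Fin n) ℂ :=
  fun p q => kronSum (X p.1) p.2 q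

/-- Simultaneous diagonalizability of a tuple. -/
def SimDiag {n K : ℕ} (X : Fin K → Matrix (Fin n) (Fin n) ℂ) : Prop :=
  ∃ S : Matrix (Fin n) (Fin n) ℂ, IsUnit S ∧ ∀ k, (S⁻¹ * X k * S).IsDiag

/-- `X` has `n` distinct eigenvalues. -/
def HasDistinctEigenvalues {n : ℕ} (X : Matrix (Fin n) (Fin n) ℂ) : Prop :=
  ∃ μ : Fin n → ℂ, Function.Injective μ ∧
    ∀ i, Module.End.HasEigenvalue (Matrix.mulVecLin X) (μ i)

/-- Squared Frobenius norm. -/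
noncomputable def frobSq {m p : Type*} [Fintype m] [Fintype p] (X : Matrix m p ℂ) : ℝ :=
  ∑ i, ∑ j, ‖X i j‖ ^ 2

/-- Khatri–Rao (column-wise Kronecker) product. -/
def khatriRao {n : ℕ} (X Y : Matrix (Fin n) (Fin n) ℂ) :
    Matrix (Fin n × Fin n) (Fin n) ℂ :=
  fun p j => X p.1 j * Y p.2 j

/-!
For `M` commuting with every `X k`, `Ξ(X) vec M = 0`, because
`(I ⊗ X - Xᵀ ⊗ I) vec M = vec (X M - M X)`. If every `S⁻¹ X_k S` is diagonal, then all
`S D S⁻¹` with `D` diagonal commute with the `X k`; these form an `n`-dimensional space, spanned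
by the columns of the Khatri–Rao product `S⁻ᵀ ⊙ S`. Hence `Ξ(X) (S⁻ᵀ ⊙ S) = 0` with the second
factor of rank `n`, and Sylvester's inequality gives `rank Ξ(X) + n ≤ n²`.
-/

theorem kronSum_mulVec_vec {n : ℕ} (A M : Matrix (Fin n) (Fin n) ℂ) :
    kronSum A *ᵥ vec M = vec (A * M - M * A) := by
  rw [kronSum, sub_mulVec, kronecker_mulVec_vec, kronecker_mulVec_vec, transpose_transpose,
    transpose_one, Matrix.mul_one, Matrix.one_mul, vec_sub]

theorem XiM_mulVec_vec_eq_zero_of_commute {n K : ℕ} (X : Fin K → Matrix (Fin n) (Fin n) ℂ)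
    {M : Matrix (Fin n) (Fin n) ℂ} (hM : ∀ k, Commute (X k) M) : XiM X *ᵥ vec M = 0 := by
  ext ⟨k, p⟩
  change (kronSum (X k) *ᵥ vec M) p = 0
  rw [kronSum_mulVec_vec, (hM k).eq, sub_self, vec_zero, Pi.zero_apply]

theorem khatriRao_transpose_mulVec {n : ℕ} (A B : Matrix (Fin n) (Fin n) ℂ) (c : Fin n → ℂ) :
    khatriRao Aᵀ B *ᵥ c = vec (B * diagonal c * A) := by
  ext ⟨j, l⟩
  simp only [khatriRao, mulVec, dotProduct, vec, mul_apply (M := B * diagonal c), mul_diagonal,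
    transpose_apply]
  exact Finset.sum_congr rfl fun i _ => by ring

theorem commute_conj_diagonal_of_isDiag {n : ℕ} {S A : Matrix (Fin n) (Fin n) ℂ} (hS : IsUnit S)
    (hA : (S⁻¹ * A * S).IsDiag) (c : Fin n → ℂ) : Commute A (S * diagonal c * S⁻¹) := by
  have hdet : IsUnit S.det := (isUnit_iff_isUnit_det S).mp hS
  have hA' : A = S * diagonal (S⁻¹ * A * S).diag * S⁻¹ := by
    rw [hA.diagonal_diag, Matrix.mul_assoc, Matrix.mul_assoc, Matrix.mul_nonsing_inv _ hdet,
      Matrix.mul_one, ← Matrix.mul_assoc, Matrix.mul_nonsing_inv _ hdet, Matrix.one_mul]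
  rw [hA', Commute, SemiconjBy]
  simp only [Matrix.mul_assoc, Matrix.nonsing_inv_mul_cancel_left _ _ hdet]
  rw [← Matrix.mul_assoc (diagonal _), (commute_diagonal _ _).eq, Matrix.mul_assoc]

theorem rank_khatriRao_inv_transpose {n : ℕ} {S : Matrix (Fin n) (Fin n) ℂ} (hS : IsUnit S) :
    (khatriRao S⁻¹ᵀ S).rank = n := by
  have hinj : Function.Injective (khatriRao S⁻¹ᵀ S).mulVecLin := by
    intro c d h
    simp only [mulVecLin_apply, khatriRao_transpose_mulVec, vec_inj] at h
    have hdet : IsUnit S.det := (isUnit_iff_isUnit_det S).mp hS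
    apply diagonal_injective
    simpa [Matrix.mul_assoc, Matrix.nonsing_inv_mul_cancel_left _ _ hdet,
      Matrix.nonsing_inv_mul _ hdet] using congr_arg (fun M => S⁻¹ * M * S) h
  rw [rank, LinearMap.finrank_range_of_inj hinj, Module.finrank_fin_fun]

theorem simDiag_rank_le {n K : ℕ} (X : Fin K → Matrix (Fin n) (Fin n) ℂ)
    (hX : SimDiag X) : (XiM X).rank ≤ n ^ 2 - n := by
  obtain ⟨S, hS, hdiag⟩ := hX
  have hmul : XiM X * khatriRao S⁻¹ᵀ S = 0 := by
    refine Matrix.toLin'.injective (LinearMap.ext fun c => ?_)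
    rw [toLin'_mul, LinearMap.comp_apply, toLin'_apply, toLin'_apply, khatriRao_transpose_mulVec,
      map_zero, LinearMap.zero_apply]
    exact XiM_mulVec_vec_eq_zero_of_commute X fun k =>
      commute_conj_diagonal_of_isDiag hS (hdiag k) c
  have hrank := rank_add_rank_le_card_of_mul_eq_zero hmul
  rw [rank_khatriRao_inv_transpose hS, Fintype.card_prod, Fintype.card_fin] at hrank
  rw [sq]
  omega
end

section
/- Suppose (Y_1,…,Y_K) are n×n complex matrices with rank(Ξ(Y_1,…,Y_K)) ≤ n² − n, and some Y_l has n distinct eigenvalues and is diagonalized as S⁻¹Y_lS with invertible S. Then S⁻¹Y_kS is diagonal for every k = 1,…,K. -/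
open Matrix Kronecker

/-
`Ξ(Y) vec(M) = 0` exactly when `M` commutes with every `Y_k`, so the rank bound says that the
common centralizer of the `Y_k` has dimension at least `n`. Conjugating by `S` embeds the
centralizer of `Y_l` into the diagonal matrices, so it has dimension at most `n`; hence the two
centralizers coincide, and `Y_l`, which lies in the second, commutes with every `Y_k`. Every
`S⁻¹ Y_k S` then commutes with the diagonal matrix `S⁻¹ Y_l S`, whose entries are distinct, and is
therefore diagonal.
-/

open Module Function

namespace Matrix

variable {K ι : Type*} [Field K] [Fintype ι] [DecidableEq ι]

theorem isDiag_of_commute_diagonal {d : ι → K} (hd : Injective d) {A : Matrix ι ι K}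
    (h : Commute (diagonal d) A) : A.IsDiag := by
  intro i j hij
  have hij' : d i * A i j = A i j * d j := by
    simpa only [diagonal_mul, mul_diagonal] using congrFun (congrFun h.eq i) j
  have hprod : (d i - d j) * A i j = 0 := by linear_combination hij'
  exact (mul_eq_zero.1 hprod).resolve_left (sub_ne_zero.2 (hd.ne hij))

theorem conj_mul_conj {S : Matrix ι ι K} (hS : IsUnit S) (A B : Matrix ι ι K) :
    (S⁻¹ * A * S) * (S⁻¹ * B * S) = S⁻¹ * (A * B) * S := by
  simp only [Matrix.mul_assoc,
    mul_nonsing_inv_cancel_left S _ ((isUnit_iff_isUnit_det S).1 hS)]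

theorem conj_commute_conj {S A B : Matrix ι ι K} (hS : IsUnit S) (h : Commute A B) :
    Commute (S⁻¹ * A * S) (S⁻¹ * B * S) := by
  rw [Commute, SemiconjBy, conj_mul_conj hS, conj_mul_conj hS, h.eq]

theorem exists_eq_of_hasEigenvalue_of_conj_eq_diagonal {S B : Matrix ι ι K} (hS : IsUnit S)
    {d : ι → K} (hB : S⁻¹ * B * S = diagonal d) {μ : K}
    (hμ : End.HasEigenvalue B.mulVecLin μ) : ∃ i, d i = μ := by
  rw [← hasEigenvalue_toLin'_diagonal_iff, End.hasEigenvalue_iff_isRoot_charpoly,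
    charpoly_toLin', ← hB, ← hS.unit_spec, charpoly_units_conj']
  rwa [End.hasEigenvalue_iff_isRoot_charpoly, ← toLin'_apply', charpoly_toLin'] at hμ

theorem finrank_centralizer_singleton_le {S B : Matrix ι ι K} (hS : IsUnit S) {d : ι → K}
    (hB : S⁻¹ * B * S = diagonal d) (hd : Injective d) :
    finrank K (Subalgebra.centralizer K {B}).toSubmodule ≤ Fintype.card ι := by
  let diagConj : Matrix ι ι K →ₗ[K] ι → K :=
    diagLinearMap ι K K ∘ₗ LinearMap.mulRight K S ∘ₗ LinearMap.mulLeft K S⁻¹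
  have hinj : Injective (diagConj ∘ₗ (Subalgebra.centralizer K {B}).toSubmodule.subtype) := by
    rw [← LinearMap.ker_eq_bot, LinearMap.ker_eq_bot']
    rintro ⟨M, hM⟩ hdiagM
    have hcomm : Commute (diagonal d) (S⁻¹ * M * S) :=
      hB ▸ (conj_commute_conj hS (Subalgebra.mem_centralizer_iff K |>.1 hM B rfl))
    have hzero : S⁻¹ * M * S = 0 := by
      rw [← (isDiag_of_commute_diagonal hd hcomm).diagonal_diag]
      exact diagonal_eq_zero.2 hdiagM
    have hSdet := (isUnit_iff_isUnit_det S).1 hS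
    have hM : M = S * (S⁻¹ * M * S) * S⁻¹ := by
      simp only [Matrix.mul_assoc, mul_nonsing_inv_cancel_left S _ hSdet, mul_nonsing_inv S hSdet,
        Matrix.mul_one]
    simpa [hzero] using hM
  simpa using LinearMap.finrank_le_finrank_of_injective hinj

end Matrix

def vecMEquiv (n : ℕ) : Matrix (Fin n) (Fin n) ℂ ≃ₗ[ℂ] (Fin n × Fin n → ℂ) where
  toFun := vecM
  invFun v i j := v (j, i)
  map_add' _ _ := rfl
  map_smul' _ _ := rfl
  left_inv _ := rfl
  right_inv _ := rfl

@[simp]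
theorem vecMEquiv_apply {n : ℕ} (M : Matrix (Fin n) (Fin n) ℂ) : vecMEquiv n M = vecM M := rfl

theorem kronSum_mulVec_vecM {n : ℕ} (X M : Matrix (Fin n) (Fin n) ℂ) :
    kronSum X *ᵥ vecM M = vecM (X * M - M * X) := by
  funext ⟨j, i⟩
  simp only [kronSum, vecM, mulVec, dotProduct, Matrix.sub_apply, kroneckerMap_apply,
    Fintype.sum_prod_type, mul_apply]
  simp [mul_sub, Finset.sum_sub_distrib, one_apply, mul_ite, mul_comm]

theorem kronSum_mulVec_vecM_eq_zero_iff {n : ℕ} (X M : Matrix (Fin n) (Fin n) ℂ) :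
    kronSum X *ᵥ vecM M = 0 ↔ Commute X M := by
  rw [kronSum_mulVec_vecM, ← vecMEquiv_apply, LinearEquiv.map_eq_zero_iff, sub_eq_zero]
  rfl

theorem XiM_mulVec_eq_zero_iff {n K : ℕ} (Y : Fin K → Matrix (Fin n) (Fin n) ℂ)
    (v : Fin n × Fin n → ℂ) : XiM Y *ᵥ v = 0 ↔ ∀ k, kronSum (Y k) *ᵥ v = 0 := by
  simp only [funext_iff, Prod.forall]
  rfl

theorem XiM_mulVec_vecM_eq_zero_iff {n K : ℕ} (Y : Fin K → Matrix (Fin n) (Fin n) ℂ)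
    (M : Matrix (Fin n) (Fin n) ℂ) :
    XiM Y *ᵥ vecM M = 0 ↔ M ∈ Subalgebra.centralizer ℂ (Set.range Y) := by
  simp only [XiM_mulVec_eq_zero_iff, kronSum_mulVec_vecM_eq_zero_iff,
    Subalgebra.mem_centralizer_iff, Set.forall_mem_range]
  rfl

theorem finrank_centralizer_add_rank_XiM {n K : ℕ} (Y : Fin K → Matrix (Fin n) (Fin n) ℂ) :
    finrank ℂ (Subalgebra.centralizer ℂ (Set.range Y)).toSubmodule + (XiM Y).rank = n ^ 2 := by
  have hker : (Subalgebra.centralizer ℂ (Set.range Y)).toSubmodule.map (vecMEquiv n).toLinearMap =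
      LinearMap.ker (XiM Y).mulVecLin := by
    ext v
    rw [Submodule.mem_map_equiv, Subalgebra.mem_toSubmodule, LinearMap.mem_ker, mulVecLin_apply,
      ← XiM_mulVec_vecM_eq_zero_iff, ← vecMEquiv_apply, LinearEquiv.apply_symm_apply]
  rw [← LinearEquiv.finrank_map_eq (vecMEquiv n), hker, add_comm, rank,
    LinearMap.finrank_range_add_finrank_ker]
  simp [sq]

theorem HasDistinctEigenvalues.injective_of_conj_eq_diagonal {n : ℕ}
    {B S : Matrix (Fin n) (Fin n) ℂ} (hB : HasDistinctEigenvalues B) (hS : IsUnit S)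
    {d : Fin n → ℂ} (hd : S⁻¹ * B * S = diagonal d) : Injective d := by
  obtain ⟨μ, hμ, hμB⟩ := hB
  choose g hg using fun i => exists_eq_of_hasEigenvalue_of_conj_eq_diagonal hS hd (hμB i)
  have hdg : Injective (d ∘ g) := by rwa [show d ∘ g = μ from funext hg]
  exact hdg.of_comp_right (Finite.injective_iff_surjective.1 hdg.of_comp)

theorem common_diagonalizer_of_low_rank {n K : ℕ}
    (Y : Fin K → Matrix (Fin n) (Fin n) ℂ)
    (hrank : (XiM Y).rank ≤ n ^ 2 - n)
    (l : Fin K) (hl : HasDistinctEigenvalues (Y l))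
    (S : Matrix (Fin n) (Fin n) ℂ) (hS : IsUnit S)
    (hdiag : (S⁻¹ * Y l * S).IsDiag) :
    ∀ k, (S⁻¹ * Y k * S).IsDiag := by
  have hD : S⁻¹ * Y l * S = diagonal (S⁻¹ * Y l * S).diag := hdiag.diagonal_diag.symm
  have hd := hl.injective_of_conj_eq_diagonal hS hD
  have hle : (Subalgebra.centralizer ℂ (Set.range Y)).toSubmodule ≤
      (Subalgebra.centralizer ℂ {Y l}).toSubmodule :=
    Subalgebra.centralizer_le ℂ _ _ (Set.singleton_subset_iff.2 ⟨l, rfl⟩)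
  have hfinrank : finrank ℂ (Subalgebra.centralizer ℂ {Y l}).toSubmodule ≤
      finrank ℂ (Subalgebra.centralizer ℂ (Set.range Y)).toSubmodule := by
    have hsum := finrank_centralizer_add_rank_XiM Y
    have hsingle := finrank_centralizer_singleton_le hS hD hd
    rw [Fintype.card_fin] at hsingle
    have := Nat.le_self_pow two_ne_zero n
    omega
  have hYl : Y l ∈ Subalgebra.centralizer ℂ (Set.range Y) := by
    rw [← Subalgebra.mem_toSubmodule, Submodule.eq_of_le_of_finrank_le hle hfinrank]
    exact (Subalgebra.mem_centralizer_iff ℂ).2 (by simp)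
  intro k
  have hcomm := (Subalgebra.mem_centralizer_iff ℂ).1 hYl (Y k) ⟨k, rfl⟩
  exact isDiag_of_commute_diagonal hd (hD ▸ (conj_commute_conj hS hcomm).symm)
end

section
/- Let (X_1,…,X_K) ∈ (ℂ^{n×n})^K and let Z = (Z_1,…,Z_K) be its projection onto the affine fiber Ξ⁻¹(Ĥ) for some Ĥ in the range of Ξ. Then Σ_{k=1}^K ‖X_k − Z_k‖_F² = ‖Ξ(X_1,…,X_K) − Ĥ‖_F² / (2n). -/
open Matrix Kronecker

/-! The map `W ↦ I ⊗ W - Wᵀ ⊗ I` is linear with kernel the scalar matrices, so the fiber of `Ξ`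
through `Xd` is `{(Xd_k + c_k I)_k}`. Writing `W = X_k - Xd_k` and expanding Frobenius norms as
traces, `‖I ⊗ W - Wᵀ ⊗ I‖² = 2n‖W‖² - 2|tr W|²` and `n‖W - cI‖² = n‖W‖² - |tr W|² + |nc - tr W|²`.
The last term is nonnegative and vanishes at `c = tr W / n`, so a nearest point of the fiber
leaves exactly `n‖W‖² - |tr W|²`, half of `‖I ⊗ W - Wᵀ ⊗ I‖² / n`. -/
lemma kronSum_sub {n : ℕ} (A B : Matrix (Fin n) (Fin n) ℂ) :
    kronSum (A - B) = kronSum A - kronSum B := by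
  ext ⟨a, b⟩ ⟨c, d⟩
  simp only [kronSum, Matrix.sub_apply, kronecker_apply, transpose_apply]
  ring

lemma kronSum_smul_one {n : ℕ} (c : ℂ) : kronSum (c • 1 : Matrix (Fin n) (Fin n) ℂ) = 0 := by
  rw [kronSum, transpose_smul, transpose_one, kronecker_smul, smul_kronecker, sub_self]

lemma kronSum_eq_zero_iff {n : ℕ} {W : Matrix (Fin n) (Fin n) ℂ} :
    kronSum W = 0 ↔ ∃ c : ℂ, W = c • 1 := by
  refine ⟨fun h => ?_, fun ⟨c, hc⟩ => hc ▸ kronSum_smul_one c⟩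
  have hW (a b c d : Fin n) :
      W b d * (1 : Matrix (Fin n) (Fin n) ℂ) a c = W c a * (1 : Matrix (Fin n) (Fin n) ℂ) b d := by
    have := congrFun (congrFun h (a, b)) (c, d)
    simp only [kronSum, Matrix.sub_apply, kronecker_apply, transpose_apply,
      Matrix.zero_apply] at this
    linear_combination this
  rcases isEmpty_or_nonempty (Fin n) with _ | ⟨⟨i₀⟩⟩
  · exact ⟨0, Subsingleton.elim _ _⟩
  refine ⟨W i₀ i₀, ?_⟩
  ext i j
  rcases eq_or_ne i j with rfl | hij
  · simpa using hW i₀ i i₀ i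
  · simpa [hij] using hW i i i j

lemma XiM_sub {n K : ℕ} (X Y : Fin K → Matrix (Fin n) (Fin n) ℂ) :
    XiM (X - Y) = XiM X - XiM Y := by
  ext
  simp [XiM, kronSum_sub]

lemma XiM_eq_zero_iff {n K : ℕ} {X : Fin K → Matrix (Fin n) (Fin n) ℂ} :
    XiM X = 0 ↔ ∀ k, kronSum (X k) = 0 := by
  simp only [← Matrix.ext_iff, XiM, Prod.forall, Matrix.zero_apply]

lemma XiM_eq_XiM_iff {n K : ℕ} {X Y : Fin K → Matrix (Fin n) (Fin n) ℂ} :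
    XiM Y = XiM X ↔ ∃ c : Fin K → ℂ, Y = X + fun k => c k • 1 := by
  rw [← sub_eq_zero, ← XiM_sub, XiM_eq_zero_iff]
  simp only [kronSum_eq_zero_iff, Classical.skolem, funext_iff, Pi.add_apply, Pi.sub_apply,
    sub_eq_iff_eq_add']

lemma ofReal_frobSq {m p : Type*} [Fintype m] [Fintype p] (X : Matrix m p ℂ) :
    (frobSq X : ℂ) = trace (X * Xᴴ) := by
  simp [frobSq, trace, mul_apply, Complex.mul_conj, Complex.normSq_eq_norm_sq]

lemma frobSq_kronSum {n : ℕ} (W : Matrix (Fin n) (Fin n) ℂ) :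
    frobSq (kronSum W) = 2 * n * frobSq W - 2 * Complex.normSq (trace W) := by
  have hT : trace (Wᵀ * Wᵀᴴ) = trace (W * Wᴴ) := by
    rw [conjTranspose_transpose_eq_transpose_conjTranspose, ← transpose_mul, trace_transpose,
      trace_mul_comm]
  apply Complex.ofReal_injective
  simp only [ofReal_frobSq, kronSum, conjTranspose_sub, conjTranspose_kronecker, conjTranspose_one,
    sub_mul, mul_sub, ← mul_kronecker_mul, trace_sub, trace_kronecker, one_mul, mul_one, trace_one,
    Fintype.card_fin, trace_transpose, trace_conjTranspose, hT, Complex.ofReal_sub,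
    Complex.ofReal_mul, Complex.ofReal_ofNat, Complex.ofReal_natCast,
    Complex.normSq_eq_conj_mul_self, Complex.star_def]
  ring

lemma frobSq_sub_smul_one {m : Type*} [Fintype m] [DecidableEq m] (W : Matrix m m ℂ) (c : ℂ) :
    Fintype.card m * frobSq (W - c • 1) = Fintype.card m * frobSq W - Complex.normSq (trace W)
      + Complex.normSq (Fintype.card m * c - trace W) := by
  apply Complex.ofReal_injective
  simp only [ofReal_frobSq, conjTranspose_sub, conjTranspose_smul, conjTranspose_one,
    sub_mul, mul_sub, Matrix.mul_smul, Matrix.smul_mul, mul_one, one_mul, trace_sub, trace_smul,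
    trace_one, trace_conjTranspose, Complex.ofReal_sub, Complex.ofReal_add, Complex.ofReal_mul,
    Complex.ofReal_natCast, Complex.normSq_eq_conj_mul_self, map_sub, map_mul, map_natCast,
    smul_eq_mul, Complex.star_def]
  ring

lemma frobSq_XiM {n K : ℕ} (X : Fin K → Matrix (Fin n) (Fin n) ℂ) :
    frobSq (XiM X) = ∑ k, frobSq (kronSum (X k)) := by
  simp [frobSq, XiM, Fintype.sum_prod_type]

lemma nat_mul_sum_frobSq_sub_add_smul_one {n K : ℕ} (X Xd : Fin K → Matrix (Fin n) (Fin n) ℂ)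
    (c : Fin K → ℂ) :
    n * ∑ k, frobSq (X k - (Xd k + c k • 1)) =
      frobSq (XiM X - XiM Xd) / 2 + ∑ k, Complex.normSq (n * c k - trace (X k - Xd k)) := by
  rw [← XiM_sub, frobSq_XiM, Finset.mul_sum, Finset.sum_div, ← Finset.sum_add_distrib]
  refine Finset.sum_congr rfl fun k _ => ?_
  have hW := frobSq_sub_smul_one (X k - Xd k) (c k)
  rw [Fintype.card_fin] at hW
  rw [← sub_sub, hW, Pi.sub_apply, frobSq_kronSum]
  ring

theorem projection_distance_formula_general {n K : ℕ}
    (X Xd Z : Fin K → Matrix (Fin n) (Fin n) ℂ)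
    (hZ : XiM Z = XiM Xd)
    (hmin : ∀ Y : Fin K → Matrix (Fin n) (Fin n) ℂ, XiM Y = XiM Xd →
      ∑ k, frobSq (X k - Z k) ≤ ∑ k, frobSq (X k - Y k)) :
    ∑ k, frobSq (X k - Z k) = frobSq (XiM X - XiM Xd) / (2 * n) := by
  rcases Nat.eq_zero_or_pos n with rfl | hn
  · simp [frobSq]
  obtain ⟨c, rfl⟩ := XiM_eq_XiM_iff.1 hZ
  set c₀ : Fin K → ℂ := fun k => trace (X k - Xd k) / n
  have hc₀ : ∀ k, (n : ℂ) * c₀ k - trace (X k - Xd k) = 0 := fun k => by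
    simp [c₀, mul_div_cancel₀, hn.ne']
  have hY := nat_mul_sum_frobSq_sub_add_smul_one X Xd c₀
  simp only [hc₀, map_zero, Finset.sum_const_zero, add_zero] at hY
  have hle := hmin (Xd + fun k => c₀ k • 1) (XiM_eq_XiM_iff.2 ⟨c₀, rfl⟩)
  simp only [Pi.add_apply] at hle ⊢
  have hupper : n * ∑ k, frobSq (X k - (Xd k + c k • 1)) ≤ frobSq (XiM X - XiM Xd) / 2 :=
    hY ▸ mul_le_mul_of_nonneg_left hle (Nat.cast_nonneg n)
  have hlower : frobSq (XiM X - XiM Xd) / 2 ≤ n * ∑ k, frobSq (X k - (Xd k + c k • 1)) :=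
    nat_mul_sum_frobSq_sub_add_smul_one X Xd c ▸
      le_add_of_nonneg_right (Finset.sum_nonneg fun k _ => Complex.normSq_nonneg _)
  rw [eq_div_iff (by positivity)]
  linarith

theorem projection_distance_formula {n K : ℕ} (hn : 0 < n)
    (X Xd Z : Fin K → Matrix (Fin n) (Fin n) ℂ)
    (hZ : XiM Z = XiM Xd)
    (hmin : ∀ Y : Fin K → Matrix (Fin n) (Fin n) ℂ, XiM Y = XiM Xd →
      ∑ k, frobSq (X k - Z k) ≤ ∑ k, frobSq (X k - Y k)) :
    ∑ k, frobSq (X k - Z k) = frobSq (XiM X - XiM Xd) / (2 * n) :=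
  projection_distance_formula_general X Xd Z hZ hmin
end
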